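/- Proposition 4(c): Suppose n_α ≥ 2 and min{ f_α + δ·((n_α−2)·f_α + n_β·f_β), f_α + δ·((n_α−1)·f_α + (n_β−1)·f_β) } > c > (1−δ)·f_α. Then the maximum over all networks g on I of u_i(g) equals f_α + δ·((n_α−2)·f_α + n_β·f_β) − c when i is a type-α agent, and equals f_α + δ·((n_α−1)·f_α + (n_β−1)·f_β) − c when i is a type-β agent; in both cases the maximum is attained (e.g. when i is a periphery agent of a star with a type-α center). -/

import Mathlib

open Finset

noncomputable section

open scoped Classical

variable {I : Type*}

/-- Benefit function of the two-type connections model: a connection to a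
type-α agent (a member of `A`) yields `fα`, a connection to a type-β agent
yields `fβ` (before spatial discounting). -/
def fTheta [DecidableEq I] (A : Finset I) (fα fβ : ℝ) (j : I) : ℝ :=
  if j ∈ A then fα else fβ

/-- One-period payoff of agent `i` in network `g`:
`u_i(g) = Σ_{j ≠ i reachable from i} δ^(d_g(i,j)-1) f(θ_j) − deg_g(i)·c`. -/
def payoff [Fintype I] (f : I → ℝ) (c δ : ℝ) (g : SimpleGraph I) (i : I) : ℝ :=
  (∑ j ∈ univ.filter fun j => j ≠ i ∧ g.Reachable i j, δ ^ (g.dist i j - 1) * f j)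
    - ((univ.filter fun j => g.Adj i j).card : ℝ) * c

/-- Total one-period payoff `ν(g) = Σ_i u_i(g)`. -/
def totalPayoff [Fintype I] (f : I → ℝ) (c δ : ℝ) (g : SimpleGraph I) : ℝ :=
  ∑ i, payoff f c δ g i

/-- A network is strongly efficient if it maximizes the total payoff. -/
def StronglyEfficient [Fintype I] (f : I → ℝ) (c δ : ℝ) (g : SimpleGraph I) : Prop :=
  ∀ g' : SimpleGraph I, totalPayoff f c δ g' ≤ totalPayoff f c δ g

/-- A network `g` is core-stable if no subgroup `I'` of agents, together with a
network `g'` all of whose links are inside `I'`, gives every member of `I'` a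
weakly higher payoff and some member a strictly higher payoff. -/
def CoreStable [Fintype I] (f : I → ℝ) (c δ : ℝ) (g : SimpleGraph I) : Prop :=
  ¬ ∃ (I' : Finset I) (g' : SimpleGraph I),
      (∀ i j : I, g'.Adj i j → i ∈ I' ∧ j ∈ I') ∧
      (∀ i ∈ I', payoff f c δ g i ≤ payoff f c δ g' i) ∧
      (∃ i ∈ I', payoff f c δ g i < payoff f c δ g' i)

/-- The network whose links are exactly the pairs with at least one endpoint in `A`. -/
def withCore (A : Finset I) : SimpleGraph I where
  Adj i j := i ≠ j ∧ (i ∈ A ∨ j ∈ A)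
  symm := ⟨fun i j h => ⟨h.1.symm, h.2.symm⟩⟩
  loopless := ⟨fun i h => h.1 rfl⟩

/-- The clique on `A`: exactly all pairs of distinct members of `A` are linked. -/
def cliqueOn (A : Finset I) : SimpleGraph I where
  Adj i j := i ≠ j ∧ i ∈ A ∧ j ∈ A
  symm := ⟨fun i j h => ⟨h.1.symm, h.2.2, h.2.1⟩⟩
  loopless := ⟨fun i h => h.1 rfl⟩

/-- Clique on `A` together with the links `{i₀, j}` for every agent `j ∉ A`. -/
def coreStar (A : Finset I) (i₀ : I) : SimpleGraph I where
  Adj i j := i ≠ j ∧ ((i ∈ A ∧ j ∈ A) ∨ (i = i₀ ∧ j ∉ A) ∨ (j = i₀ ∧ i ∉ A))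
  symm := by
    refine ⟨?_⟩
    rintro i j ⟨hne, h⟩
    refine ⟨hne.symm, ?_⟩
    rcases h with h | h | h
    · exact Or.inl ⟨h.2, h.1⟩
    · exact Or.inr (Or.inr h)
    · exact Or.inr (Or.inl h)
  loopless := ⟨fun i h => h.1 rfl⟩

/-- The star on all agents centered at `i₀`. -/
def starAll (i₀ : I) : SimpleGraph I where
  Adj i j := i ≠ j ∧ (i = i₀ ∨ j = i₀)
  symm := ⟨fun i j h => ⟨h.1.symm, h.2.symm⟩⟩
  loopless := ⟨fun i h => h.1 rfl⟩

/-- The star on the agents in `A`, centered at `i₀`. -/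
def starOn (A : Finset I) (i₀ : I) : SimpleGraph I where
  Adj i j := i ≠ j ∧ (i = i₀ ∨ j = i₀) ∧ i ∈ A ∧ j ∈ A
  symm := ⟨fun i j h => ⟨h.1.symm, h.2.1.symm, h.2.2.2, h.2.2.1⟩⟩
  loopless := ⟨fun i h => h.1 rfl⟩

/-!
A link to `j` is worth `f j - c`, whereas reaching `j` at distance at least two is worth at most
`δ * f j`. Since every link costs more than the `(1 - δ) * fα` it can save, an agent that is not
isolated earns at most `δ * Σ_{j ≠ i} f j + (1 - δ) * fα - c`: one link to a type-α agent, everybody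
else at distance two. A periphery agent of the star centred at a type-α agent attains this bound,
and the hypothesis on `c` makes it beat isolation.
-/

lemma pow_dist_sub_one_le {δ : ℝ} (hδ0 : 0 ≤ δ) (hδ1 : δ ≤ 1) {g : SimpleGraph I} {i j : I}
    (hji : j ≠ i) (hr : g.Reachable i j) (hadj : ¬ g.Adj i j) : δ ^ (g.dist i j - 1) ≤ δ :=
  pow_le_of_le_one hδ0 hδ1 (by have := hr.one_lt_dist_of_ne_of_not_adj hji.symm hadj; omega)

section Payoff

variable [Fintype I] (f : I → ℝ) (c δ : ℝ) {g : SimpleGraph I} {i : I}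

lemma payoff_eq_zero_of_isIsolated (hi : g.IsIsolated i) : payoff f c δ g i = 0 := by
  have hN : (univ.filter fun j => g.Adj i j) = ∅ := filter_false_of_mem fun j _ => hi j
  have hR : (univ.filter fun j => j ≠ i ∧ g.Reachable i j) = ∅ :=
    filter_false_of_mem fun j _ ⟨hji, ⟨p⟩⟩ => hi _ (p.adj_snd (p.not_nil_of_ne hji.symm))
  simp [payoff, hN, hR]

lemma payoff_le_of_not_isIsolated (M : ℝ) (hf0 : ∀ j, 0 ≤ f j) (hfM : ∀ j, f j ≤ M)
    (hδ0 : 0 ≤ δ) (hδ1 : δ ≤ 1) (hc : (1 - δ) * M ≤ c) (hi : ¬ g.IsIsolated i) :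
    payoff f c δ g i ≤ M + δ * (∑ j, f j - f i - M) - c := by
  set R := univ.filter fun j => j ≠ i ∧ g.Reachable i j
  set N := univ.filter fun j => g.Adj i j
  have hNR : N ⊆ R := fun j hj => by
    have hadj := (mem_filter.1 hj).2
    exact mem_filter.2 ⟨mem_univ j, hadj.ne.symm, hadj.reachable⟩
  have hN : N.Nonempty := by
    obtain ⟨j, hj⟩ := g.exists_adj_iff_not_isIsolated.2 hi
    exact ⟨j, mem_filter.2 ⟨mem_univ j, hj⟩⟩
  have hdisc : ∑ j ∈ R, δ ^ (g.dist i j - 1) * f j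
      ≤ δ * ∑ j ∈ R, f j + (1 - δ) * ∑ j ∈ N, f j := by
    have hfar : ∑ j ∈ R \ N, δ ^ (g.dist i j - 1) * f j ≤ δ * ∑ j ∈ R \ N, f j := by
      rw [mul_sum]
      refine sum_le_sum fun j hj => mul_le_mul_of_nonneg_right ?_ (hf0 j)
      obtain ⟨hjR, hjN⟩ := mem_sdiff.1 hj
      obtain ⟨-, hji, hr⟩ := mem_filter.1 hjR
      exact pow_dist_sub_one_le hδ0 hδ1 hji hr fun h => hjN (mem_filter.2 ⟨mem_univ j, h⟩)
    have hnear : ∑ j ∈ N, δ ^ (g.dist i j - 1) * f j = ∑ j ∈ N, f j :=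
      sum_congr rfl fun j hj => by
        simp [SimpleGraph.dist_eq_one_iff_adj.2 (mem_filter.1 hj).2]
    rw [← sum_sdiff hNR, ← sum_sdiff hNR (f := f), hnear]
    linarith
  have hR : ∑ j ∈ R, f j ≤ ∑ j, f j - f i := by
    rw [← sum_erase_eq_sub (mem_univ i)]
    exact sum_le_sum_of_subset_of_nonneg (fun j hj => mem_erase.2 ⟨(mem_filter.1 hj).2.1,
      mem_univ j⟩) fun j _ _ => hf0 j
  have hlinks : (1 - δ) * ∑ j ∈ N, f j - N.card * c ≤ (1 - δ) * M - c := by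
    have hsum : ∑ j ∈ N, f j ≤ N.card * M := by
      simpa using sum_le_card_nsmul N f M fun j _ => hfM j
    have hcard : (1 : ℝ) ≤ N.card := by exact_mod_cast hN.card_pos
    nlinarith
  have := mul_le_mul_of_nonneg_left hR hδ0
  rw [payoff]
  linarith

lemma payoff_le_max (M : ℝ) (hf0 : ∀ j, 0 ≤ f j) (hfM : ∀ j, f j ≤ M)
    (hδ0 : 0 ≤ δ) (hδ1 : δ ≤ 1) (hc : (1 - δ) * M ≤ c) (g : SimpleGraph I) (i : I) :
    payoff f c δ g i ≤ max 0 (M + δ * (∑ j, f j - f i - M) - c) := by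
  by_cases hi : g.IsIsolated i
  · exact (payoff_eq_zero_of_isIsolated f c δ hi).le.trans (le_max_left _ _)
  · exact (payoff_le_of_not_isIsolated f c δ M hf0 hfM hδ0 hδ1 hc hi).trans (le_max_right _ _)

lemma payoff_starAll {j₀ : I} (hne : i ≠ j₀) :
    payoff f c δ (starAll j₀) i = f j₀ + δ * (∑ j, f j - f i - f j₀) - c := by
  have hadj : ∀ j, (starAll j₀).Adj i j ↔ j = j₀ := fun j =>
    ⟨fun ⟨_, h⟩ => h.resolve_left hne, fun h => ⟨h ▸ hne, Or.inr h⟩⟩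
  have hij₀ : (starAll j₀).Adj i j₀ := (hadj j₀).2 rfl
  have hreach : ∀ j, (starAll j₀).Reachable i j := fun j => by
    by_cases hj : j = j₀
    · exact hj ▸ hij₀.reachable
    · exact hij₀.reachable.trans (SimpleGraph.Adj.reachable ⟨Ne.symm hj, Or.inl rfl⟩)
  have hR : (univ.filter fun j => j ≠ i ∧ (starAll j₀).Reachable i j) = univ.erase i := by
    ext j; simp [hreach j]
  have hN : (univ.filter fun j => (starAll j₀).Adj i j) = {j₀} := by
    ext j; simp [hadj j]
  have hdist : ∀ j ∈ (univ.erase i).erase j₀, (starAll j₀).dist i j = 2 := fun j hj => by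
    obtain ⟨hjj₀, hj⟩ := mem_erase.1 hj
    have hji := (mem_erase.1 hj).1
    have hle : (starAll j₀).dist i j ≤ 2 := SimpleGraph.dist_le
      (.cons hij₀ (.cons (⟨Ne.symm hjj₀, Or.inl rfl⟩ : (starAll j₀).Adj j₀ j) .nil))
    have hlt := (hreach j).one_lt_dist_of_ne_of_not_adj (Ne.symm hji) (by rwa [hadj])
    omega
  have hj₀ : j₀ ∈ univ.erase i := mem_erase.2 ⟨Ne.symm hne, mem_univ j₀⟩
  rw [payoff, hR, hN, ← add_sum_erase _ _ hj₀, SimpleGraph.dist_eq_one_iff_adj.2 hij₀,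
    sum_congr rfl fun j hj => by rw [hdist j hj], ← mul_sum, sum_erase_eq_sub hj₀,
    sum_erase_eq_sub (mem_univ i)]
  simp

theorem isGreatest_payoff_of_starAll (M : ℝ) (hf0 : ∀ j, 0 ≤ f j) (hfM : ∀ j, f j ≤ M)
    (hδ0 : 0 ≤ δ) (hδ1 : δ ≤ 1) (hc : (1 - δ) * M ≤ c) {j₀ : I} (hne : i ≠ j₀) (hj₀ : f j₀ = M)
    (hprofit : c ≤ M + δ * (∑ j, f j - f i - M)) :
    IsGreatest (Set.range fun g : SimpleGraph I => payoff f c δ g i)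
      (M + δ * (∑ j, f j - f i - M) - c) := by
  refine ⟨⟨starAll j₀, (payoff_starAll f c δ hne).trans (by rw [hj₀])⟩, ?_⟩
  rintro _ ⟨g, rfl⟩
  simpa [max_eq_right (sub_nonneg.2 hprofit)] using
    payoff_le_max f c δ M hf0 hfM hδ0 hδ1 hc g i

end Payoff

lemma sum_fTheta [Fintype I] [DecidableEq I] (A : Finset I) (fα fβ : ℝ) :
    ∑ j, fTheta A fα fβ j = A.card * fα + Aᶜ.card * fβ := by
  simp [fTheta, sum_ite, filter_not, compl_eq_univ_sdiff, mul_comm]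

theorem prop4c_general {I : Type*} [Fintype I] [DecidableEq I]
    (A : Finset I) (fα fβ c δ : ℝ)
    (hfαβ : fβ < fα) (hfβ : 0 < fβ)
    (hδ0 : 0 < δ) (hδ1 : δ < 1)
    (hA2 : 2 ≤ A.card)
    (h1 : min (fα + δ * (((A.card : ℝ) - 2) * fα + (Aᶜ.card : ℝ) * fβ))
        (fα + δ * (((A.card : ℝ) - 1) * fα + ((Aᶜ.card : ℝ) - 1) * fβ)) > c)
    (h2 : c > (1 - δ) * fα) :
    (∀ i ∈ A, IsGreatest (Set.range fun g : SimpleGraph I => payoff (fTheta A fα fβ) c δ g i)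
      (fα + δ * (((A.card : ℝ) - 2) * fα + (Aᶜ.card : ℝ) * fβ) - c)) ∧
    (∀ i ∉ A, IsGreatest (Set.range fun g : SimpleGraph I => payoff (fTheta A fα fβ) c δ g i)
      (fα + δ * (((A.card : ℝ) - 1) * fα + ((Aᶜ.card : ℝ) - 1) * fβ) - c)) := by
  have hf0 : ∀ j, 0 ≤ fTheta A fα fβ j := fun j => by unfold fTheta; split <;> linarith
  have hfM : ∀ j, fTheta A fα fβ j ≤ fα := fun j => by unfold fTheta; split <;> linarith
  have hmax : ∀ i j₀, j₀ ∈ A → i ≠ j₀ →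
      c ≤ fα + δ * (∑ j, fTheta A fα fβ j - fTheta A fα fβ i - fα) →
      IsGreatest (Set.range fun g : SimpleGraph I => payoff (fTheta A fα fβ) c δ g i)
        (fα + δ * (∑ j, fTheta A fα fβ j - fTheta A fα fβ i - fα) - c) := fun i j₀ hj₀ hne =>
    isGreatest_payoff_of_starAll _ c δ fα hf0 hfM hδ0.le hδ1.le h2.le hne (by simp [fTheta, hj₀])
  have hα := lt_of_lt_of_le h1 (min_le_left _ _)
  have hβ := lt_of_lt_of_le h1 (min_le_right _ _)
  refine ⟨fun i hi => ?_, fun i hi => ?_⟩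
  · obtain ⟨j₀, hj₀, hj₀i⟩ := A.exists_mem_ne (by omega) i
    have hval : fα + δ * (∑ j, fTheta A fα fβ j - fTheta A fα fβ i - fα)
        = fα + δ * (((A.card : ℝ) - 2) * fα + (Aᶜ.card : ℝ) * fβ) := by
      rw [sum_fTheta, show fTheta A fα fβ i = fα by simp [fTheta, hi]]; ring
    simpa only [hval] using hmax i j₀ hj₀ hj₀i.symm (hval ▸ hα.le)
  · obtain ⟨j₀, hj₀⟩ := card_pos.1 (by omega : 0 < A.card)
    have hval : fα + δ * (∑ j, fTheta A fα fβ j - fTheta A fα fβ i - fα)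
        = fα + δ * (((A.card : ℝ) - 1) * fα + ((Aᶜ.card : ℝ) - 1) * fβ) := by
      rw [sum_fTheta, show fTheta A fα fβ i = fβ by simp [fTheta, hi]]; ring
    simpa only [hval] using hmax i j₀ hj₀ (fun h => hi (h ▸ hj₀)) (hval ▸ hβ.le)

/-- Proposition 4(c): the attained maximum one-period payoff of an agent over
all networks, in the periphery-of-a-star regime. -/
theorem prop4c {I : Type*} [Fintype I] [DecidableEq I]
    (A : Finset I) (fα fβ c δ : ℝ)
    (hA : 1 ≤ A.card) (hB : 1 ≤ Aᶜ.card)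
    (hfαβ : fβ < fα) (hfβ : 0 < fβ) (hc : 0 < c)
    (hδ0 : 0 < δ) (hδ1 : δ < 1)
    (hA2 : 2 ≤ A.card)
    (h1 : min (fα + δ * (((A.card : ℝ) - 2) * fα + (Aᶜ.card : ℝ) * fβ))
        (fα + δ * (((A.card : ℝ) - 1) * fα + ((Aᶜ.card : ℝ) - 1) * fβ)) > c)
    (h2 : c > (1 - δ) * fα) :
    (∀ i ∈ A, IsGreatest (Set.range fun g : SimpleGraph I => payoff (fTheta A fα fβ) c δ g i)
      (fα + δ * (((A.card : ℝ) - 2) * fα + (Aᶜ.card : ℝ) * fβ) - c)) ∧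
    (∀ i ∉ A, IsGreatest (Set.range fun g : SimpleGraph I => payoff (fTheta A fα fβ) c δ g i)
      (fα + δ * (((A.card : ℝ) - 1) * fα + ((Aᶜ.card : ℝ) - 1) * fβ) - c)) :=
  prop4c_general A fα fβ c δ hfαβ hfβ hδ0 hδ1 hA2 h1 h2
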